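/- arXiv:1207.4694 — 6 statements merged into one kernel-verified Lean document; each statement's English description precedes it below -/
import Mathlib

section
/- Let T : ℕ → ℝ be a function with T(s) ≥ 0 for all s, T(s) ≤ 2^(s/3) for all s ≤ 4, and T(s) ≤ max{2·T(s−3), T(s−2) + T(s−5)} for all s ≥ 5. Then T(s) ≤ 2^(s/3) for all natural numbers s. -/
theorem stmt_1 (T : ℕ → ℝ)
    (hpos : ∀ s, 0 ≤ T s)
    (hbase : ∀ s, s ≤ 4 → T s ≤ (2 : ℝ) ^ ((s : ℝ) / 3))
    (hrec : ∀ s, 5 ≤ s → T s ≤ max (2 * T (s - 3)) (T (s - 2) + T (s - 5))) :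
    ∀ s : ℕ, T s ≤ (2 : ℝ) ^ ((s : ℝ) / 3) := by
  intro s
  induction s using Nat.strong_induction_on with
  | _ s ih =>
    rcases le_or_gt s 4 with h | h
    · exact hbase s h
    · have h5 : 5 ≤ s := h
      have h3 := ih (s - 3) (by omega)
      have h2 := ih (s - 2) (by omega)
      have h5' := ih (s - 5) (by omega)
      rw [Nat.cast_sub (by omega : 3 ≤ s)] at h3
      rw [Nat.cast_sub (by omega : 2 ≤ s)] at h2
      rw [Nat.cast_sub (by omega : 5 ≤ s)] at h5'
      push_cast at h3 h2 h5'
      refine (hrec s h5).trans (max_le ?_ ?_)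
      · calc 2 * T (s - 3) ≤ 2 * (2 : ℝ) ^ (((s : ℝ) - 3) / 3) := by linarith
          _ = (2 : ℝ) ^ ((s : ℝ) / 3) := by
              rw [show (2 : ℝ) * (2:ℝ) ^ (((s:ℝ) - 3)/3)
                  = (2:ℝ) ^ (1 : ℝ) * (2:ℝ) ^ (((s:ℝ) - 3)/3) by norm_num,
                ← Real.rpow_add (by norm_num)]
              ring_nf
      · have e2 : (2 : ℝ) ^ (((s : ℝ) - 2) / 3)
            = (2 : ℝ) ^ ((s : ℝ) / 3) * (2 : ℝ) ^ (-(2:ℝ)/3) := by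
          rw [← Real.rpow_add (by norm_num)]; ring_nf
        have e5 : (2 : ℝ) ^ (((s : ℝ) - 5) / 3)
            = (2 : ℝ) ^ ((s : ℝ) / 3) * (2 : ℝ) ^ (-(5:ℝ)/3) := by
          rw [← Real.rpow_add (by norm_num)]; ring_nf
        have key : (2 : ℝ) ^ (-(2:ℝ)/3) + (2 : ℝ) ^ (-(5:ℝ)/3) ≤ 1 := by
          have hx : (2 : ℝ) ^ ((1:ℝ)/3) ≤ 4/3 := by
            have h1 : (2 : ℝ) ≤ (4/3 : ℝ) ^ (3:ℕ) := by norm_num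
            have := Real.rpow_le_rpow (by norm_num) h1 (by norm_num : (0:ℝ) ≤ 1/3)
            rwa [← Real.rpow_natCast (4/3 : ℝ) 3, ← Real.rpow_mul (by norm_num),
              show ((3:ℕ):ℝ) * (1/3 : ℝ) = 1 by norm_num, Real.rpow_one] at this
          have hm1 : (2:ℝ) ^ (-(1:ℝ)) = 1/2 := by
            rw [Real.rpow_neg_one]; norm_num
          have hm2 : (2:ℝ) ^ (-(2:ℝ)) = 1/4 := by
            rw [show (-(2:ℝ)) = (-2 : ℤ) by norm_num, Real.rpow_intCast]; norm_num
          have e2' : (2 : ℝ) ^ (-(2:ℝ)/3) = (2:ℝ) ^ ((1:ℝ)/3) / 2 := by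
            rw [show (-(2:ℝ)/3) = (1:ℝ)/3 + (-(1:ℝ)) by norm_num,
              Real.rpow_add (by norm_num), hm1]
            ring
          have e5' : (2 : ℝ) ^ (-(5:ℝ)/3) = (2:ℝ) ^ ((1:ℝ)/3) / 4 := by
            rw [show (-(5:ℝ)/3) = (1:ℝ)/3 + (-(2:ℝ)) by norm_num,
              Real.rpow_add (by norm_num), hm2]
            ring
          rw [e2', e5']
          linarith
        have hp : (0:ℝ) ≤ (2 : ℝ) ^ ((s : ℝ) / 3) := (Real.rpow_pos_of_pos (by norm_num) _).le
        calc T (s - 2) + T (s - 5)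
            ≤ (2 : ℝ) ^ (((s : ℝ) - 2) / 3) + (2 : ℝ) ^ (((s : ℝ) - 5) / 3) := by linarith
          _ = (2 : ℝ) ^ ((s : ℝ) / 3) * ((2 : ℝ) ^ (-(2:ℝ)/3) + (2 : ℝ) ^ (-(5:ℝ)/3)) := by
              rw [e2, e5]; ring
          _ ≤ (2 : ℝ) ^ ((s : ℝ) / 3) * 1 := by
              exact mul_le_mul_of_nonneg_left key hp
          _ = (2 : ℝ) ^ ((s : ℝ) / 3) := mul_one _
end

section
/- Let α, β, γ be real numbers satisfying: 3α + β + 4γ ≥ 1, 3α + (7/3)β ≥ 1, 2^(−5α−2γ) + 2^(−2α−2γ) ≤ 1, 4α ≥ 1, and 2^(−4α−2γ) + 2^(−3α−2γ) ≤ 1. Define R(n,s,x,y,f) = 2^(αs + β(x + (7/3)y − n/4) + γf) for real n, s, x, y, f. Then for all real n, s, x, y, f: (1) 2·R(n, s−3, x−1, y, f−4) ≤ R(n,s,x,y,f); (2) 2·R(n, s−3, x, y−1, f) ≤ R(n,s,x,y,f); (3) R(n, s−5, x, y, f−2) + R(n, s−2, x, y, f−2) ≤ R(n,s,x,y,f);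 (4) 2·R(n, s−4, x, y, f) ≤ R(n,s,x,y,f); (5) R(n, s−4, x, y, f−2) + R(n, s−3, x, y, f−2) ≤ R(n,s,x,y,f). -/
/-- The exponential function `R(n,s,x,y,f) = 2^(αs + β(x + (7/3)y − n/4) + γf)`. -/
noncomputable def R (α β γ n s x y f : ℝ) : ℝ :=
  (2 : ℝ) ^ (α * s + β * (x + (7 / 3) * y - n / 4) + γ * f)

lemma aux_mul (t c : ℝ) (hc : 1 ≤ c) : 2 * (2 : ℝ) ^ (t - c) ≤ (2 : ℝ) ^ t := by
  have h : (2 : ℝ) * (2 : ℝ) ^ (t - c) = (2 : ℝ) ^ (1 + (t - c)) := by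
    rw [Real.rpow_add two_pos, Real.rpow_one]
  rw [h]
  exact Real.rpow_le_rpow_of_exponent_le one_le_two (by linarith)

lemma aux_sum (t a b : ℝ) (h : (2 : ℝ) ^ (-a) + (2 : ℝ) ^ (-b) ≤ 1) :
    (2 : ℝ) ^ (t - a) + (2 : ℝ) ^ (t - b) ≤ (2 : ℝ) ^ t := by
  have ha : (2 : ℝ) ^ (t - a) = (2 : ℝ) ^ t * (2 : ℝ) ^ (-a) := by
    rw [← Real.rpow_add two_pos]; ring_nf
  have hb : (2 : ℝ) ^ (t - b) = (2 : ℝ) ^ t * (2 : ℝ) ^ (-b) := by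
    rw [← Real.rpow_add two_pos]; ring_nf
  calc (2 : ℝ) ^ (t - a) + (2 : ℝ) ^ (t - b) = (2 : ℝ) ^ t * ((2:ℝ)^(-a) + (2:ℝ)^(-b)) := by
        rw [ha, hb]; ring
    _ ≤ (2 : ℝ) ^ t * 1 := by
        exact mul_le_mul_of_nonneg_left h (Real.rpow_nonneg (by norm_num) t)
    _ = (2 : ℝ) ^ t := mul_one _

theorem stmt_5 (α β γ : ℝ)
    (h1 : 3 * α + β + 4 * γ ≥ 1)
    (h2 : 3 * α + (7 / 3) * β ≥ 1)
    (h3 : (2 : ℝ) ^ (-5 * α - 2 * γ) + (2 : ℝ) ^ (-2 * α - 2 * γ) ≤ 1)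
    (h4 : 4 * α ≥ 1)
    (h5 : (2 : ℝ) ^ (-4 * α - 2 * γ) + (2 : ℝ) ^ (-3 * α - 2 * γ) ≤ 1) :
    ∀ n s x y f : ℝ,
      2 * R α β γ n (s - 3) (x - 1) y (f - 4) ≤ R α β γ n s x y f ∧
      2 * R α β γ n (s - 3) x (y - 1) f ≤ R α β γ n s x y f ∧
      R α β γ n (s - 5) x y (f - 2) + R α β γ n (s - 2) x y (f - 2) ≤ R α β γ n s x y f ∧
      2 * R α β γ n (s - 4) x y f ≤ R α β γ n s x y f ∧
      R α β γ n (s - 4) x y (f - 2) + R α β γ n (s - 3) x y (f - 2) ≤ R α β γ n s x y f := by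
  intro n s x y f
  unfold R
  set E := α * s + β * (x + (7 / 3) * y - n / 4) + γ * f with hE
  refine ⟨?_, ?_, ?_, ?_, ?_⟩
  · rw [show α * (s - 3) + β * (x - 1 + (7 / 3) * y - n / 4) + γ * (f - 4)
        = E - (3 * α + β + 4 * γ) by rw [hE]; ring]
    exact aux_mul _ _ h1
  · rw [show α * (s - 3) + β * (x + (7 / 3) * (y - 1) - n / 4) + γ * f
        = E - (3 * α + (7 / 3) * β) by rw [hE]; ring]
    exact aux_mul _ _ h2
  · rw [show α * (s - 5) + β * (x + (7 / 3) * y - n / 4) + γ * (f - 2)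
        = E - (5 * α + 2 * γ) by rw [hE]; ring,
        show α * (s - 2) + β * (x + (7 / 3) * y - n / 4) + γ * (f - 2)
        = E - (2 * α + 2 * γ) by rw [hE]; ring]
    refine aux_sum _ _ _ ?_
    have e1 : -(5 * α + 2 * γ) = -5 * α - 2 * γ := by ring
    have e2 : -(2 * α + 2 * γ) = -2 * α - 2 * γ := by ring
    rw [e1, e2]; exact h3
  · rw [show α * (s - 4) + β * (x + (7 / 3) * y - n / 4) + γ * f
        = E - (4 * α) by rw [hE]; ring]
    exact aux_mul _ _ h4
  · rw [show α * (s - 4) + β * (x + (7 / 3) * y - n / 4) + γ * (f - 2)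
        = E - (4 * α + 2 * γ) by rw [hE]; ring,
        show α * (s - 3) + β * (x + (7 / 3) * y - n / 4) + γ * (f - 2)
        = E - (3 * α + 2 * γ) by rw [hE]; ring]
    refine aux_sum _ _ _ ?_
    have e1 : -(4 * α + 2 * γ) = -4 * α - 2 * γ := by ring
    have e2 : -(3 * α + 2 * γ) = -3 * α - 2 * γ := by ring
    rw [e1, e2]; exact h5
end

section
/- Let α = 157/531, β = 20/413, γ = 20/1239, and define R(n,s,x,y,f) = 2^(αs + β(x + (7/3)y − n/4) + γf) for real n, s, x, y, f. Let D = {(n,s,x,y,f) ∈ ℝ⁵ : s ≥ 0, f ≥ 0, and 3x + 7y ≥ (3/4)n}. Suppose T : ℝ⁵ → ℝ satisfies: T ≥ 0 everywhere; T(n,s,x,y,f) = 0 whenever (n,s,x,y,f) ∉ D; and for every (n,s,x,y,f) ∈ D, T(n,s,x,y,f) ≤ max{1, 2T(n,s−3,x−1,y,f−4), 2T(n,s−3,x,y−1,f), T(n,s−5,x,y,f−2)+T(n,s−2,x,y,f−2), 2T(n,s−4,x,y,f), T(n,s−4,x,y,f−2)+T(n,s−3,x,y,f−2)}. Then T(n,s,x,y,f)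 ≤ R(n,s,x,y,f) for every (n,s,x,y,f) ∈ D. -/
/-!
Write `R = 2 ^ E` with `E` linear. Over the common denominator `3717 = 63 · 59` the weights are
`α = 1099/3717`, `β = 180/3717`, `γ = 60/3717`. The two doubling branches with an A- or B-branch
lower `E` by exactly `3α + β + 4γ = 3α + 7β/3 = 1`, the doubling branch `s ↦ s - 4` lowers it by
`4α > 1`, and the two binary branches lower it by `(5α + 2γ, 2α + 2γ) = (5615, 2318)/3717` and
`(4α + 2γ, 3α + 2γ) = (4516, 3417)/3717`, for which `2^(-d₁) + 2^(-d₂) ≤ 1`. On the domain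
`x + 7y/3 ≥ n/4`, hence `E ≥ 0` and the leaf case `1 ≤ R` holds. Since every branch lowers `s`,
induction on `⌈s⌉` closes the argument.
-/

open Real

noncomputable def leafExponent (n s x y f : ℝ) : ℝ :=
  157 / 531 * s + 20 / 413 * (x + 7 / 3 * y - n / 4) + 20 / 1239 * f

theorem forall_of_forall_le_sub_one {P : ℝ → Prop} (hneg : ∀ s < 0, P s)
    (hstep : ∀ s, 0 ≤ s → (∀ t ≤ s - 1, P t) → P s) (s : ℝ) : P s := by
  suffices h : ∀ k : ℕ, ∀ s < (k : ℝ), P s from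
    let ⟨k, hk⟩ := exists_nat_gt s
    h k s hk
  intro k
  induction k with
  | zero => simpa using hneg
  | succ k ih =>
    intro s hs
    rcases lt_or_ge s 0 with hs0 | hs0
    · exact hneg s hs0
    · exact hstep s hs0 fun t ht => ih t (by push_cast at hs; linarith)

theorem add_le_rpow_of_branching {b t₁ t₂ a₁ a₂ d₁ d₂ a : ℝ} (hb : 1 ≤ b)
    (h₁ : t₁ ≤ b ^ a₁) (h₂ : t₂ ≤ b ^ a₂) (ha₁ : a₁ + d₁ ≤ a) (ha₂ : a₂ + d₂ ≤ a)
    (hd : b ^ (-d₁) + b ^ (-d₂) ≤ 1) : t₁ + t₂ ≤ b ^ a := by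
  have hb₀ : 0 < b := one_pos.trans_le hb
  have shift : ∀ {c d}, c + d ≤ a → b ^ c ≤ b ^ a * b ^ (-d) := fun h => by
    rw [← rpow_add hb₀]
    exact rpow_le_rpow_of_exponent_le hb (by linarith)
  calc t₁ + t₂ ≤ b ^ a * b ^ (-d₁) + b ^ a * b ^ (-d₂) :=
        add_le_add (h₁.trans (shift ha₁)) (h₂.trans (shift ha₂))
    _ = b ^ a * (b ^ (-d₁) + b ^ (-d₂)) := by ring
    _ ≤ b ^ a := mul_le_of_le_one_right (by positivity) hd

theorem rpow_neg_div_le_div {c p q a b : ℕ} (hc : 0 < c) (hq : q ≠ 0) (hb : 0 < b)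
    (h : b ^ q ≤ a ^ q * c ^ p) : (c : ℝ) ^ (-(p / q : ℝ)) ≤ a / b := by
  refine le_of_pow_le_pow_left₀ hq (by positivity) ?_
  have hpow : ((c : ℝ) ^ (-(p / q : ℝ))) ^ q = ((c : ℝ) ^ p)⁻¹ := by
    rw [← rpow_natCast, ← rpow_mul c.cast_nonneg, neg_mul, div_mul_cancel₀ _ (by positivity),
      rpow_neg c.cast_nonneg, rpow_natCast]
  rw [hpow, div_pow, inv_le_iff_one_le_mul₀' (by positivity), mul_div_assoc',
    le_div_iff₀ (by positivity), one_mul, mul_comm]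
  exact_mod_cast h

theorem branching_5615_2318_le_one :
    (2:ℝ) ^ (-(5615 / 3717 : ℝ)) + 2 ^ (-(2318 / 3717 : ℝ)) ≤ 1 := by
  -- The true sum is `1 - 1.5·10⁻⁶`, so six decimal digits are needed.
  have h₁ := rpow_neg_div_le_div (c := 2) (p := 5615) (q := 3717) (a := 350959) (b := 1000000)
    (by norm_num) (by norm_num) (by norm_num) (by decide +kernel)
  have h₂ := rpow_neg_div_le_div (c := 2) (p := 2318) (q := 3717) (a := 649040) (b := 1000000)
    (by norm_num) (by norm_num) (by norm_num) (by decide +kernel)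
  push_cast at h₁ h₂
  linarith

theorem branching_4516_3417_le_one :
    (2:ℝ) ^ (-(4516 / 3717 : ℝ)) + 2 ^ (-(3417 / 3717 : ℝ)) ≤ 1 := by
  have h₁ := rpow_neg_div_le_div (c := 2) (p := 4516) (q := 3717) (a := 44) (b := 100)
    (by norm_num) (by norm_num) (by norm_num) (by decide +kernel)
  have h₂ := rpow_neg_div_le_div (c := 2) (p := 3417) (q := 3717) (a := 56) (b := 100)
    (by norm_num) (by norm_num) (by norm_num) (by decide +kernel)
  push_cast at h₁ h₂
  linarith

theorem branch_max_le_two_rpow_leafExponent {T : ℝ → ℝ → ℝ → ℝ → ℝ → ℝ} {n s x y f : ℝ}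
    (hD : 0 ≤ s ∧ 0 ≤ f ∧ 3 / 4 * n ≤ 3 * x + 7 * y)
    (ih : ∀ s' x' y' f', s' ≤ s - 1 → T n s' x' y' f' ≤ 2 ^ leafExponent n s' x' y' f') :
    max 1 (max (2 * T n (s - 3) (x - 1) y (f - 4))
      (max (2 * T n (s - 3) x (y - 1) f)
        (max (T n (s - 5) x y (f - 2) + T n (s - 2) x y (f - 2))
          (max (2 * T n (s - 4) x y f)
            (T n (s - 4) x y (f - 2) + T n (s - 3) x y (f - 2)))))) ≤
      2 ^ leafExponent n s x y f := by
  obtain ⟨hs, hf, hxy⟩ := hD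
  have halving : (2:ℝ) ^ (-1 : ℝ) + 2 ^ (-1 : ℝ) ≤ 1 := by norm_num
  have branch : ∀ {s₁ x₁ y₁ f₁ s₂ x₂ y₂ f₂ d₁ d₂ : ℝ}, (2:ℝ) ^ (-d₁) + 2 ^ (-d₂) ≤ 1 →
      s₁ ≤ s - 1 → s₂ ≤ s - 1 →
      leafExponent n s₁ x₁ y₁ f₁ + d₁ ≤ leafExponent n s x y f →
      leafExponent n s₂ x₂ y₂ f₂ + d₂ ≤ leafExponent n s x y f →
      T n s₁ x₁ y₁ f₁ + T n s₂ x₂ y₂ f₂ ≤ 2 ^ leafExponent n s x y f :=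
    fun hd hs₁ hs₂ hd₁ hd₂ =>
      add_le_rpow_of_branching one_le_two (ih _ _ _ _ hs₁) (ih _ _ _ _ hs₂) hd₁ hd₂ hd
  simp only [two_mul]
  refine max_le (one_le_rpow one_le_two ?_) <|
    max_le (branch halving ?_ ?_ ?_ ?_) <|
    max_le (branch halving ?_ ?_ ?_ ?_) <|
    max_le (branch branching_5615_2318_le_one ?_ ?_ ?_ ?_) <|
    max_le (branch halving ?_ ?_ ?_ ?_) (branch branching_4516_3417_le_one ?_ ?_ ?_ ?_)
  all_goals
    try unfold leafExponent
    linarith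

theorem stmt_6_general (T : ℝ → ℝ → ℝ → ℝ → ℝ → ℝ)
    (hout : ∀ n s x y f, ¬(0 ≤ s ∧ 0 ≤ f ∧ (3 / 4) * n ≤ 3 * x + 7 * y) →
      T n s x y f = 0)
    (hrec : ∀ n s x y f, (0 ≤ s ∧ 0 ≤ f ∧ (3 / 4) * n ≤ 3 * x + 7 * y) →
      T n s x y f ≤
        max 1 (max (2 * T n (s - 3) (x - 1) y (f - 4))
          (max (2 * T n (s - 3) x (y - 1) f)
            (max (T n (s - 5) x y (f - 2) + T n (s - 2) x y (f - 2))
              (max (2 * T n (s - 4) x y f)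
                (T n (s - 4) x y (f - 2) + T n (s - 3) x y (f - 2))))))) :
    ∀ n s x y f : ℝ, (0 ≤ s ∧ 0 ≤ f ∧ (3 / 4) * n ≤ 3 * x + 7 * y) →
      T n s x y f ≤
        (2 : ℝ) ^ ((157 / 531 : ℝ) * s + (20 / 413 : ℝ) * (x + (7 / 3) * y - n / 4) +
          (20 / 1239 : ℝ) * f) := by
  intro n
  have bound : ∀ s x y f, T n s x y f ≤ 2 ^ leafExponent n s x y f := by
    refine forall_of_forall_le_sub_one (P := fun s => ∀ x y f, T n s x y f ≤ _) ?_ ?_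
    · intro s hs x y f
      rw [hout n s x y f fun hD => hs.not_ge hD.1]
      positivity
    · intro s _ ih x y f
      by_cases hD : 0 ≤ s ∧ 0 ≤ f ∧ 3 / 4 * n ≤ 3 * x + 7 * y
      · exact (hrec n s x y f hD).trans
          (branch_max_le_two_rpow_leafExponent hD fun s' x' y' f' hs' => ih s' hs' x' y' f')
      · rw [hout n s x y f hD]
        positivity
  exact fun s x y f _ => bound s x y f

theorem stmt_6 (T : ℝ → ℝ → ℝ → ℝ → ℝ → ℝ)
    (hnonneg : ∀ n s x y f, 0 ≤ T n s x y f)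
    (hout : ∀ n s x y f, ¬(0 ≤ s ∧ 0 ≤ f ∧ (3 / 4) * n ≤ 3 * x + 7 * y) →
      T n s x y f = 0)
    (hrec : ∀ n s x y f, (0 ≤ s ∧ 0 ≤ f ∧ (3 / 4) * n ≤ 3 * x + 7 * y) →
      T n s x y f ≤
        max 1 (max (2 * T n (s - 3) (x - 1) y (f - 4))
          (max (2 * T n (s - 3) x (y - 1) f)
            (max (T n (s - 5) x y (f - 2) + T n (s - 2) x y (f - 2))
              (max (2 * T n (s - 4) x y f)
                (T n (s - 4) x y (f - 2) + T n (s - 3) x y (f - 2))))))) :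
    ∀ n s x y f : ℝ, (0 ≤ s ∧ 0 ≤ f ∧ (3 / 4) * n ≤ 3 * x + 7 * y) →
      T n s x y f ≤
        (2 : ℝ) ^ ((157 / 531 : ℝ) * s + (20 / 413 : ℝ) * (x + (7 / 3) * y - n / 4) +
          (20 / 1239 : ℝ) * f) :=
  stmt_6_general T hout hrec
end

section
/- Let α = 157/531, β = 20/413, γ = 20/1239, D and T : ℝ⁵ → ℝ be as follows: D = {(n,s,x,y,f) ∈ ℝ⁵ : s ≥ 0, f ≥ 0, 3x + 7y ≥ (3/4)n}; T ≥ 0 everywhere; T = 0 outside D; and for every point of D, T(n,s,x,y,f) ≤ max{1, 2T(n,s−3,x−1,y,f−4), 2T(n,s−3,x,y−1,f), T(n,s−5,x,y,f−2)+T(n,s−2,x,y,f−2), 2T(n,s−4,x,y,f), T(n,s−4,x,y,f−2)+T(n,s−3,x,y,f−2)}. Then for every real n ≥ 0, T(n, n, n/4, n/7, n) ≤ 2^((1219/3717)·n), and consequently T(n, n, n/4, n/7, n) ≤ 1.2553^n. -/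
set_option exponentiation.threshold 10000
set_option maxHeartbeats 1000000

/-- The potential function. -/
noncomputable def tspPhi (n s x y f : ℝ) : ℝ :=
  (157/531)*s + (20/1239)*f + (20/413)*x + (140/1239)*y - (5/413)*n

lemma tsp_pow_aux_pos (p q a c : ℕ) (hq : 0 < q) (hc : 0 < c)
    (h : 2 ^ p * c ^ q ≤ a ^ q) :
    (2:ℝ) ^ ((p:ℝ)/(q:ℝ)) ≤ (a:ℝ)/(c:ℝ) := by
  have hcast : ((2:ℝ) ^ ((p:ℝ)/(q:ℝ))) ^ q = (2:ℝ) ^ p := by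
    rw [← Real.rpow_natCast ((2:ℝ) ^ ((p:ℝ)/(q:ℝ))) q, ← Real.rpow_mul (by norm_num),
      div_mul_cancel₀ _ (by exact_mod_cast hq.ne'), Real.rpow_natCast]
  apply le_of_pow_le_pow_left₀ hq.ne' (by positivity)
  rw [hcast, div_pow, le_div_iff₀ (by positivity)]
  calc (2:ℝ) ^ p * (c:ℝ) ^ q = ((2 ^ p * c ^ q : ℕ) : ℝ) := by push_cast; ring
    _ ≤ ((a ^ q : ℕ) : ℝ) := by exact_mod_cast h
    _ = (a:ℝ) ^ q := by push_cast; ring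

lemma tsp_pow_aux_neg (p q a c : ℕ) (hq : 0 < q) (ha : 0 < a) (hc : 0 < c)
    (h : c ^ q ≤ 2 ^ p * a ^ q) :
    (2:ℝ) ^ (-((p:ℝ)/(q:ℝ))) ≤ (a:ℝ)/(c:ℝ) := by
  have h1 : (c:ℝ)/(a:ℝ) ≤ (2:ℝ) ^ ((p:ℝ)/(q:ℝ)) := by
    have hcast : ((2:ℝ) ^ ((p:ℝ)/(q:ℝ))) ^ q = (2:ℝ) ^ p := by
      rw [← Real.rpow_natCast ((2:ℝ) ^ ((p:ℝ)/(q:ℝ))) q, ← Real.rpow_mul (by norm_num),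
        div_mul_cancel₀ _ (by exact_mod_cast hq.ne'), Real.rpow_natCast]
    apply le_of_pow_le_pow_left₀ hq.ne' (by positivity)
    rw [hcast, div_pow, div_le_iff₀ (by positivity)]
    calc (c:ℝ) ^ q = ((c ^ q : ℕ) : ℝ) := by push_cast; ring
      _ ≤ ((2 ^ p * a ^ q : ℕ) : ℝ) := by exact_mod_cast h
      _ = (2:ℝ) ^ p * (a:ℝ) ^ q := by push_cast; ring
  rw [Real.rpow_neg (by norm_num)]
  have hpos : (0:ℝ) < (c:ℝ)/(a:ℝ) := by positivity
  calc ((2:ℝ) ^ ((p:ℝ)/(q:ℝ)))⁻¹ ≤ ((c:ℝ)/(a:ℝ))⁻¹ := inv_anti₀ hpos h1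
    _ = (a:ℝ)/(c:ℝ) := by rw [inv_div]

lemma tsp_branch_sum (c u v : ℝ) (h : (2:ℝ) ^ (-u) + (2:ℝ) ^ (-v) ≤ 1) :
    (2:ℝ) ^ (c - u) + (2:ℝ) ^ (c - v) ≤ (2:ℝ) ^ c := by
  have h0 : (0:ℝ) ≤ (2:ℝ) ^ c := Real.rpow_nonneg (by norm_num) c
  rw [sub_eq_add_neg, sub_eq_add_neg, Real.rpow_add two_pos, Real.rpow_add two_pos]
  nlinarith [mul_le_mul_of_nonneg_left h h0]

lemma tsp_num3 : (2:ℝ) ^ (-(5615/3717 : ℝ)) + (2:ℝ) ^ (-(2318/3717 : ℝ)) ≤ 1 := by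
  have h1 : (2:ℝ) ^ (-(5615/3717 : ℝ)) ≤ (35095870:ℝ)/(100000000:ℝ) := by
    have := tsp_pow_aux_neg 5615 3717 35095870 100000000 (by norm_num) (by norm_num)
      (by norm_num) (by norm_num)
    convert this using 3 <;> norm_num
  have h2 : (2:ℝ) ^ (-(2318/3717 : ℝ)) ≤ (64903978:ℝ)/(100000000:ℝ) := by
    have := tsp_pow_aux_neg 2318 3717 64903978 100000000 (by norm_num) (by norm_num)
      (by norm_num) (by norm_num)
    convert this using 3 <;> norm_num
  nlinarith

lemma tsp_num5 : (2:ℝ) ^ (-(4516/3717 : ℝ)) + (2:ℝ) ^ (-(3417/3717 : ℝ)) ≤ 1 := by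
  have h1 : (2:ℝ) ^ (-(4516/3717 : ℝ)) ≤ (43078554:ℝ)/(100000000:ℝ) := by
    have := tsp_pow_aux_neg 4516 3717 43078554 100000000 (by norm_num) (by norm_num)
      (by norm_num) (by norm_num)
    convert this using 3 <;> norm_num
  have h2 : (2:ℝ) ^ (-(3417/3717 : ℝ)) ≤ (52876928:ℝ)/(100000000:ℝ) := by
    have := tsp_pow_aux_neg 3417 3717 52876928 100000000 (by norm_num) (by norm_num)
      (by norm_num) (by norm_num)
    convert this using 3 <;> norm_num
  nlinarith

lemma tsp_num_base : (2:ℝ) ^ ((1219/3717 : ℝ)) ≤ 1.2553 := by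
  have := tsp_pow_aux_pos 1219 3717 12553 10000 (by norm_num) (by norm_num) (by norm_num)
  calc (2:ℝ) ^ ((1219/3717 : ℝ)) = (2:ℝ) ^ (((1219:ℕ):ℝ)/((3717:ℕ):ℝ)) := by norm_num
    _ ≤ ((12553:ℕ):ℝ)/((10000:ℕ):ℝ) := this
    _ = 1.2553 := by norm_num

lemma tsp_main (T : ℝ → ℝ → ℝ → ℝ → ℝ → ℝ)
    (hnonneg : ∀ n s x y f, 0 ≤ T n s x y f)
    (hout : ∀ n s x y f, ¬(0 ≤ s ∧ 0 ≤ f ∧ (3 / 4) * n ≤ 3 * x + 7 * y) →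
      T n s x y f = 0)
    (hrec : ∀ n s x y f, (0 ≤ s ∧ 0 ≤ f ∧ (3 / 4) * n ≤ 3 * x + 7 * y) →
      T n s x y f ≤
        max 1 (max (2 * T n (s - 3) (x - 1) y (f - 4))
          (max (2 * T n (s - 3) x (y - 1) f)
            (max (T n (s - 5) x y (f - 2) + T n (s - 2) x y (f - 2))
              (max (2 * T n (s - 4) x y f)
                (T n (s - 4) x y (f - 2) + T n (s - 3) x y (f - 2))))))) :
    ∀ k : ℕ, ∀ n s x y f : ℝ, s ≤ k →
      T n s x y f ≤ (2:ℝ) ^ (tspPhi n s x y f) := by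
  intro k
  induction k using Nat.strong_induction_on with
  | _ k IH =>
    intro n s x y f hs
    by_cases hD : (0 ≤ s ∧ 0 ≤ f ∧ (3 / 4) * n ≤ 3 * x + 7 * y)
    · obtain ⟨hs0, hf0, hxy⟩ := hD
      have hφ : 0 ≤ tspPhi n s x y f := by unfold tspPhi; linarith
      have h1le : (1:ℝ) ≤ (2:ℝ) ^ (tspPhi n s x y f) := by
        calc (1:ℝ) = (2:ℝ) ^ (0:ℝ) := (Real.rpow_zero 2).symm
          _ ≤ (2:ℝ) ^ (tspPhi n s x y f) :=
            Real.rpow_le_rpow_of_exponent_le one_le_two hφ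
      -- bound for recursive calls
      have key : ∀ s' x' y' f' : ℝ, s' ≤ s - 2 →
          T n s' x' y' f' ≤ (2:ℝ) ^ (tspPhi n s' x' y' f') := by
        intro s' x' y' f' hle
        by_cases hD' : (0 ≤ s' ∧ 0 ≤ f' ∧ (3 / 4) * n ≤ 3 * x' + 7 * y')
        · have hs2 : (2:ℝ) ≤ s := by linarith [hD'.1]
          have hk2 : 2 ≤ k := by
            have : (2:ℝ) ≤ (k:ℝ) := le_trans hs2 hs
            exact_mod_cast this
          have hcast : ((k - 2 : ℕ) : ℝ) = (k:ℝ) - 2 := by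
            push_cast [Nat.cast_sub hk2]; ring
          exact IH (k - 2) (by omega) n s' x' y' f' (by rw [hcast]; linarith)
        · rw [hout _ _ _ _ _ hD']
          positivity
      refine le_trans (hrec n s x y f ⟨hs0, hf0, hxy⟩) ?_
      apply max_le h1le
      apply max_le
      · -- branch 1 : 2 T(n, s-3, x-1, y, f-4)
        have hb := key (s-3) (x-1) y (f-4) (by linarith)
        have hφ' : tspPhi n (s-3) (x-1) y (f-4) = tspPhi n s x y f - 1 := by
          unfold tspPhi; ring
        rw [hφ'] at hb
        calc 2 * T n (s-3) (x-1) y (f-4) ≤ 2 * (2:ℝ) ^ (tspPhi n s x y f - 1) := by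
              linarith
          _ = (2:ℝ) ^ (tspPhi n s x y f) := by
              rw [Real.rpow_sub two_pos, Real.rpow_one]; ring
      apply max_le
      · -- branch 2 : 2 T(n, s-3, x, y-1, f)
        have hb := key (s-3) x (y-1) f (by linarith)
        have hφ' : tspPhi n (s-3) x (y-1) f = tspPhi n s x y f - 1 := by
          unfold tspPhi; ring
        rw [hφ'] at hb
        calc 2 * T n (s-3) x (y-1) f ≤ 2 * (2:ℝ) ^ (tspPhi n s x y f - 1) := by
              linarith
          _ = (2:ℝ) ^ (tspPhi n s x y f) := by
              rw [Real.rpow_sub two_pos, Real.rpow_one]; ring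
      apply max_le
      · -- branch 3 : T(n, s-5, x, y, f-2) + T(n, s-2, x, y, f-2)
        have hb1 := key (s-5) x y (f-2) (by linarith)
        have hb2 := key (s-2) x y (f-2) (by linarith)
        have hφ1 : tspPhi n (s-5) x y (f-2) = tspPhi n s x y f - 5615/3717 := by
          unfold tspPhi; ring
        have hφ2 : tspPhi n (s-2) x y (f-2) = tspPhi n s x y f - 2318/3717 := by
          unfold tspPhi; ring
        rw [hφ1] at hb1; rw [hφ2] at hb2
        have := tsp_branch_sum (tspPhi n s x y f) (5615/3717) (2318/3717) tsp_num3
        linarith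
      apply max_le
      · -- branch 4 : 2 T(n, s-4, x, y, f)
        have hb := key (s-4) x y f (by linarith)
        have hφ' : tspPhi n (s-4) x y f = tspPhi n s x y f - 4396/3717 := by
          unfold tspPhi; ring
        rw [hφ'] at hb
        have hmono : (2:ℝ) ^ (tspPhi n s x y f - 4396/3717) ≤
            (2:ℝ) ^ (tspPhi n s x y f - 1) :=
          Real.rpow_le_rpow_of_exponent_le one_le_two (by linarith)
        calc 2 * T n (s-4) x y f ≤ 2 * (2:ℝ) ^ (tspPhi n s x y f - 1) := by linarith
          _ = (2:ℝ) ^ (tspPhi n s x y f) := by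
              rw [Real.rpow_sub two_pos, Real.rpow_one]; ring
      · -- branch 5 : T(n, s-4, x, y, f-2) + T(n, s-3, x, y, f-2)
        have hb1 := key (s-4) x y (f-2) (by linarith)
        have hb2 := key (s-3) x y (f-2) (by linarith)
        have hφ1 : tspPhi n (s-4) x y (f-2) = tspPhi n s x y f - 4516/3717 := by
          unfold tspPhi; ring
        have hφ2 : tspPhi n (s-3) x y (f-2) = tspPhi n s x y f - 3417/3717 := by
          unfold tspPhi; ring
        rw [hφ1] at hb1; rw [hφ2] at hb2
        have := tsp_branch_sum (tspPhi n s x y f) (4516/3717) (3417/3717) tsp_num5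
        linarith
    · rw [hout _ _ _ _ _ hD]
      positivity

theorem stmt_7 (T : ℝ → ℝ → ℝ → ℝ → ℝ → ℝ)
    (hnonneg : ∀ n s x y f, 0 ≤ T n s x y f)
    (hout : ∀ n s x y f, ¬(0 ≤ s ∧ 0 ≤ f ∧ (3 / 4) * n ≤ 3 * x + 7 * y) →
      T n s x y f = 0)
    (hrec : ∀ n s x y f, (0 ≤ s ∧ 0 ≤ f ∧ (3 / 4) * n ≤ 3 * x + 7 * y) →
      T n s x y f ≤
        max 1 (max (2 * T n (s - 3) (x - 1) y (f - 4))
          (max (2 * T n (s - 3) x (y - 1) f)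
            (max (T n (s - 5) x y (f - 2) + T n (s - 2) x y (f - 2))
              (max (2 * T n (s - 4) x y f)
                (T n (s - 4) x y (f - 2) + T n (s - 3) x y (f - 2))))))) :
    ∀ n : ℝ, 0 ≤ n →
      T n n (n / 4) (n / 7) n ≤ (2 : ℝ) ^ ((1219 / 3717 : ℝ) * n) ∧
      T n n (n / 4) (n / 7) n ≤ (1.2553 : ℝ) ^ n := by
  intro n hn
  have hdiag : tspPhi n n (n/4) (n/7) n = (1219/3717 : ℝ) * n := by
    unfold tspPhi; ring
  have h1 : T n n (n/4) (n/7) n ≤ (2:ℝ) ^ ((1219/3717 : ℝ) * n) := by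
    have := tsp_main T hnonneg hout hrec (Nat.ceil n) n n (n/4) (n/7) n
      (Nat.le_ceil n)
    rwa [hdiag] at this
  refine ⟨h1, le_trans h1 ?_⟩
  calc (2:ℝ) ^ ((1219/3717 : ℝ) * n) = ((2:ℝ) ^ ((1219/3717 : ℝ))) ^ n := by
        rw [← Real.rpow_mul (by norm_num)]
    _ ≤ (1.2553 : ℝ) ^ n := by
        apply Real.rpow_le_rpow (by positivity) tsp_num_base hn
end

section
/- Let G be a simple cubic graph (every vertex has degree exactly 3) and let H be a Hamiltonian cycle of G. Suppose v1, v2, v3, v4 are four distinct vertices forming a 4-cycle in G, i.e., v1v2, v2v3, v3v4, v4v1 are edges of G, and suppose that the third edge of G incident to v1 (the one distinct from v1v2 and v1v4) and the third edge of G incident to v3 (the one distinct from v2v3 and v3v4) both belong to H. Then the third edge of G incident to v2 (distinct from v1v2 and v2v3) and the third edge of G incident to v4 (distinct from v3v4 and v4v1) also belong to H. -/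
/-!
A Hamiltonian cycle uses exactly two of the three edges at each vertex of a cubic graph, so every
vertex has exactly one unused edge. If the third edge at `v2` were unused, both 4-cycle edges at
`v2` would be used; since the third edges at `v1` and `v3` are used, this leaves `v4v1` and `v3v4`
unused, i.e. two unused edges at `v4`. The claim at `v4` is the same one for the rotated 4-cycle.
-/

namespace SimpleGraph

lemma Subgraph.incidenceSet_eq_image_neighborSet {V : Type*} {G : SimpleGraph V}
    (G' : G.Subgraph) (v : V) :
    G'.incidenceSet v = (fun w => s(v, w)) '' G'.neighborSet v := by
  ext e
  constructor
  · rintro ⟨he, hv⟩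
    obtain ⟨w, rfl⟩ := Sym2.mem_iff_exists.mp hv
    exact ⟨w, Subgraph.mem_edgeSet.mp he, rfl⟩
  · rintro ⟨w, hw, rfl⟩
    exact ⟨Subgraph.mem_edgeSet.mpr hw, Sym2.mem_mk_left v w⟩

lemma Subgraph.ncard_incidenceSet {V : Type*} {G : SimpleGraph V} (G' : G.Subgraph) (v : V) :
    (G'.incidenceSet v).ncard = (G'.neighborSet v).ncard := by
  rw [G'.incidenceSet_eq_image_neighborSet,
    Set.ncard_image_of_injective _ fun _ _ => Sym2.congr_right.mp]

lemma ncard_incidenceSet_eq_degree {V : Type*} [DecidableEq V] (G : SimpleGraph V) (v : V)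
    [Fintype (G.neighborSet v)] : (G.incidenceSet v).ncard = G.degree v := by
  rw [← coe_incidenceFinset, Set.ncard_coe_finset, card_incidenceFinset_eq_degree]

namespace Walk

variable {V : Type*} {G : SimpleGraph V} {u v : V} {p : G.Walk v v}

lemma mem_incidenceSet_toSubgraph_iff {w : V} (p : G.Walk v w) {e : Sym2 V} :
    e ∈ p.toSubgraph.incidenceSet u ↔ e ∈ p.edges ∧ u ∈ e := by
  rw [Subgraph.incidenceSet, Set.mem_ofPred_eq, mem_edges_toSubgraph]

lemma IsCycle.ncard_incidenceSet_toSubgraph (hp : p.IsCycle) (hu : u ∈ p.support) :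
    (p.toSubgraph.incidenceSet u).ncard = 2 := by
  rw [Subgraph.ncard_incidenceSet, hp.ncard_neighborSet_toSubgraph_eq_two hu]

lemma IsCycle.existsUnique_notMem_edges [DecidableEq V] [Fintype (G.neighborSet u)]
    (hp : p.IsCycle) (hu : u ∈ p.support) (hdeg : G.degree u = 3) :
    ∃! e, e ∈ G.incidenceSet u ∧ e ∉ p.edges := by
  have hcard : (G.incidenceSet u \ p.toSubgraph.incidenceSet u).ncard = 1 := by
    rw [Set.ncard_sdiff (p.toSubgraph.incidenceSet_subset_incidenceSet u)
      (Set.finite_of_ncard_pos (by rw [hp.ncard_incidenceSet_toSubgraph hu]; norm_num)),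
      ncard_incidenceSet_eq_degree, hdeg, hp.ncard_incidenceSet_toSubgraph hu]
  obtain ⟨m, hm⟩ := Set.ncard_eq_one.mp hcard
  have hiff : ∀ e, e ∈ G.incidenceSet u ∧ e ∉ p.edges ↔ e = m := fun e => by
    rw [← Set.mem_singleton_iff, ← hm, Set.mem_sdiff, mem_incidenceSet_toSubgraph_iff]
    exact and_congr_right fun he => by simp [he.2]
  exact ⟨m, (hiff m).mpr rfl, fun e he => (hiff e).mp he⟩

lemma IsCycle.notMem_edges_of_forall [DecidableEq V] [Fintype (G.neighborSet u)]
    (hp : p.IsCycle) (hu : u ∈ p.support) (hdeg : G.degree u = 3) {a b : Sym2 V}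
    (hforced : ∀ e ∈ G.incidenceSet u, e ≠ a → e ≠ b → e ∈ p.edges) (ha : a ∈ p.edges) :
    b ∉ p.edges := by
  intro hb
  obtain ⟨m, ⟨hm_inc, hm_out⟩, -⟩ := hp.existsUnique_notMem_edges hu hdeg
  exact hm_out (hforced m hm_inc (fun h => hm_out (h ▸ ha)) fun h => hm_out (h ▸ hb))

lemma IsHamiltonianCycle.mem_edges_of_forced_opposite [DecidableEq V] [G.LocallyFinite]
    (hp : p.IsHamiltonianCycle) (hcubic : ∀ u, G.degree u = 3) {v1 v2 v3 v4 : V}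
    (h13 : v1 ≠ v3) (h12 : G.Adj v1 v2) (h23 : G.Adj v2 v3) (h34 : G.Adj v3 v4)
    (h41 : G.Adj v4 v1)
    (hv1 : ∀ e ∈ G.incidenceSet v1, e ≠ s(v1, v2) → e ≠ s(v4, v1) → e ∈ p.edges)
    (hv3 : ∀ e ∈ G.incidenceSet v3, e ≠ s(v2, v3) → e ≠ s(v3, v4) → e ∈ p.edges) :
    ∀ e ∈ G.incidenceSet v2, e ≠ s(v1, v2) → e ≠ s(v2, v3) → e ∈ p.edges := by
  intro e he he12 he23
  by_contra he_out
  have hunique u := hp.isCycle.existsUnique_notMem_edges (hp.mem_support u) (hcubic u)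
  have hv2 : ∀ f ∈ G.incidenceSet v2, f ≠ e → f ∈ p.edges := fun f hf hfe => by
    by_contra hf_out
    exact hfe ((hunique v2).unique ⟨hf, hf_out⟩ ⟨he, he_out⟩)
  have h41_out : s(v4, v1) ∉ p.edges :=
    hp.isCycle.notMem_edges_of_forall (hp.mem_support v1) (hcubic v1) hv1
      (hv2 _ (G.mk'_mem_incidenceSet_right_iff.mpr h12) he12.symm)
  have h34_out : s(v3, v4) ∉ p.edges :=
    hp.isCycle.notMem_edges_of_forall (hp.mem_support v3) (hcubic v3) hv3
      (hv2 _ (G.mk'_mem_incidenceSet_left_iff.mpr h23) he23.symm)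
  have h := (hunique v4).unique ⟨G.mk'_mem_incidenceSet_right_iff.mpr h34, h34_out⟩
    ⟨G.mk'_mem_incidenceSet_left_iff.mpr h41, h41_out⟩
  rw [Sym2.eq_iff] at h
  grind

end Walk
end SimpleGraph

theorem stmt_11 {V : Type*} [Fintype V] [DecidableEq V]
    (G : SimpleGraph V) [DecidableRel G.Adj]
    (hcubic : ∀ v : V, G.degree v = 3)
    {v0 : V} (H : G.Walk v0 v0) (hH : H.IsHamiltonianCycle)
    (v1 v2 v3 v4 : V) (hnodup : [v1, v2, v3, v4].Nodup)
    (h12 : G.Adj v1 v2) (h23 : G.Adj v2 v3) (h34 : G.Adj v3 v4) (h41 : G.Adj v4 v1)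
    (hv1 : ∀ e ∈ G.incidenceSet v1, e ≠ s(v1, v2) → e ≠ s(v4, v1) → e ∈ H.edges)
    (hv3 : ∀ e ∈ G.incidenceSet v3, e ≠ s(v2, v3) → e ≠ s(v3, v4) → e ∈ H.edges) :
    (∀ e ∈ G.incidenceSet v2, e ≠ s(v1, v2) → e ≠ s(v2, v3) → e ∈ H.edges) ∧
    (∀ e ∈ G.incidenceSet v4, e ≠ s(v3, v4) → e ≠ s(v4, v1) → e ∈ H.edges) := by
  have h13 : v1 ≠ v3 := fun h => (List.nodup_cons.mp hnodup).1 (by simp [h])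
  exact ⟨hH.mem_edges_of_forced_opposite hcubic h13 h12 h23 h34 h41 hv1 hv3,
    hH.mem_edges_of_forced_opposite hcubic h13.symm h34 h41 h12 h23
      (fun e he h h' => hv3 e he h' h) fun e he h h' => hv1 e he h' h⟩
end

section
/- Let G be a simple cubic graph (every vertex has degree exactly 3) and let H be a Hamiltonian cycle of G. Suppose v1, v2, v3, v4 are four distinct vertices forming a 4-cycle in G, i.e., v1v2, v2v3, v3v4, v4v1 are edges of G, and suppose that every edge of G incident to one of v1, v2, v3, v4 and distinct from these four cycle edges belongs to H. Then H contains exactly two of the four cycle edges, and they are an opposite pair: either H contains v1v2 and v3v4 but neither v2v3 nor v4v1, or H contains v2v3 and v4v1 but neither v1v2 nor v3v4. -/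
open SimpleGraph Finset

lemma aux_xor {V : Type*} [Fintype V] [DecidableEq V]
    (G : SimpleGraph V) [DecidableRel G.Adj]
    {v0 : V} (H : G.Walk v0 v0) (hH : H.IsHamiltonianCycle)
    {x y z w : V} (hdeg : G.degree x = 3)
    (hy : G.Adj x y) (hz : G.Adj x z) (hw : G.Adj x w)
    (hyz : y ≠ z) (hyw : y ≠ w) (hzw : z ≠ w)
    (hwH : s(x, w) ∈ H.edges) :
    (s(x, y) ∈ H.edges ↔ s(x, z) ∉ H.edges) := by
  classical
  have ht : H.IsTrail := hH.isCycle.isTrail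
  set L : List (Sym2 V) := H.edges.filter (fun e => decide (x ∈ e)) with hL
  have hmemL : ∀ e : Sym2 V, e ∈ L ↔ e ∈ H.edges ∧ x ∈ e := by
    intro e; rw [hL, List.mem_filter]; simp
  have hnodup : L.Nodup := ht.edges_nodup.filter _
  have heven : Even L.length := by
    have h := (ht.even_countP_edges_iff x).2 (by simp)
    rwa [List.countP_eq_length_filter] at h
  have hsub : L.toFinset ⊆ G.incidenceFinset x := by
    intro e he
    rw [List.mem_toFinset, hmemL] at he
    rw [SimpleGraph.mem_incidenceFinset]
    exact ⟨H.edges_subset_edgeSet he.1, he.2⟩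
  have hcardL : L.toFinset.card = L.length := List.toFinset_card_of_nodup hnodup
  have hle3 : L.length ≤ 3 := by
    have := Finset.card_le_card hsub
    rwa [hcardL, SimpleGraph.card_incidenceFinset_eq_degree, hdeg] at this
  have hpos : 0 < L.length := by
    have : s(x, w) ∈ L := (hmemL _).2 ⟨hwH, by simp⟩
    exact List.length_pos_iff.2 (List.ne_nil_of_mem this)
  have hlen2 : L.length = 2 := by
    obtain ⟨k, hk⟩ := heven; omega
  -- the three incident edges are distinct
  have hAB : s(x, y) ≠ s(x, z) := by
    intro h
    rcases Sym2.eq_iff.1 h with ⟨-, h'⟩ | ⟨h1, -⟩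
    · exact hyz h'
    · exact hz.ne h1
  have hAC : s(x, y) ≠ s(x, w) := by
    intro h
    rcases Sym2.eq_iff.1 h with ⟨-, h'⟩ | ⟨h1, -⟩
    · exact hyw h'
    · exact hw.ne h1
  have hBC : s(x, z) ≠ s(x, w) := by
    intro h
    rcases Sym2.eq_iff.1 h with ⟨-, h'⟩ | ⟨h1, -⟩
    · exact hzw h'
    · exact hw.ne h1
  -- incidence finset is exactly these three edges
  have hinc : G.incidenceFinset x = {s(x, y), s(x, z), s(x, w)} := by
    symm
    apply Finset.eq_of_subset_of_card_le
    · intro e he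
      simp only [Finset.mem_insert, Finset.mem_singleton] at he
      rw [SimpleGraph.mem_incidenceFinset]
      rcases he with rfl | rfl | rfl
      · exact ⟨hy, by simp⟩
      · exact ⟨hz, by simp⟩
      · exact ⟨hw, by simp⟩
    · rw [SimpleGraph.card_incidenceFinset_eq_degree, hdeg]
      rw [Finset.card_insert_of_notMem (by simp [hAB, hAC]),
        Finset.card_insert_of_notMem (by simp [hBC]), Finset.card_singleton]
  have hsub' : L.toFinset ⊆ {s(x, y), s(x, z), s(x, w)} := hinc ▸ hsub
  have hCmem : s(x, w) ∈ L.toFinset := List.mem_toFinset.2 ((hmemL _).2 ⟨hwH, by simp⟩)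
  have hcard2 : L.toFinset.card = 2 := by rw [hcardL, hlen2]
  constructor
  · intro hA hB
    have hAm : s(x, y) ∈ L.toFinset := List.mem_toFinset.2 ((hmemL _).2 ⟨hA, by simp⟩)
    have hBm : s(x, z) ∈ L.toFinset := List.mem_toFinset.2 ((hmemL _).2 ⟨hB, by simp⟩)
    have : ({s(x, y), s(x, z), s(x, w)} : Finset (Sym2 V)) ⊆ L.toFinset := by
      intro e he
      simp only [Finset.mem_insert, Finset.mem_singleton] at he
      rcases he with rfl | rfl | rfl <;> assumption
    have h3 : ({s(x, y), s(x, z), s(x, w)} : Finset (Sym2 V)).card = 3 := by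
      rw [Finset.card_insert_of_notMem (by simp [hAB, hAC]),
        Finset.card_insert_of_notMem (by simp [hBC]), Finset.card_singleton]
    have := Finset.card_le_card this
    omega
  · intro hB
    by_contra hA
    have : L.toFinset ⊆ {s(x, w)} := by
      intro e he
      have := hsub' he
      simp only [Finset.mem_insert, Finset.mem_singleton] at this ⊢
      rcases this with rfl | rfl | rfl
      · exact absurd ((hmemL _).1 (List.mem_toFinset.1 he)).1 hA
      · exact absurd ((hmemL _).1 (List.mem_toFinset.1 he)).1 hB
      · rfl
    have := Finset.card_le_card this
    simp [hcard2] at this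

theorem stmt_12 {V : Type*} [Fintype V] [DecidableEq V]
    (G : SimpleGraph V) [DecidableRel G.Adj]
    (hcubic : ∀ v : V, G.degree v = 3)
    {v0 : V} (H : G.Walk v0 v0) (hH : H.IsHamiltonianCycle)
    (v1 v2 v3 v4 : V) (hnodup : [v1, v2, v3, v4].Nodup)
    (h12 : G.Adj v1 v2) (h23 : G.Adj v2 v3) (h34 : G.Adj v3 v4) (h41 : G.Adj v4 v1)
    (hatt : ∀ e ∈ G.edgeSet, (v1 ∈ e ∨ v2 ∈ e ∨ v3 ∈ e ∨ v4 ∈ e) →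
      e ≠ s(v1, v2) → e ≠ s(v2, v3) → e ≠ s(v3, v4) → e ≠ s(v4, v1) → e ∈ H.edges) :
    (s(v1, v2) ∈ H.edges ∧ s(v3, v4) ∈ H.edges ∧
      s(v2, v3) ∉ H.edges ∧ s(v4, v1) ∉ H.edges) ∨
    (s(v2, v3) ∈ H.edges ∧ s(v4, v1) ∈ H.edges ∧
      s(v1, v2) ∉ H.edges ∧ s(v3, v4) ∉ H.edges) := by
  classical
  simp only [List.nodup_cons, List.mem_cons, List.mem_singleton, List.not_mem_nil,
    or_false, not_or, List.nodup_nil, and_true, List.mem_nil_iff] at hnodup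
  obtain ⟨⟨h12', h13, h14⟩, ⟨h23', h24⟩, h34', -⟩ := hnodup
  -- third neighbor of a vertex x with two known distinct neighbors a b
  have third : ∀ x a b : V, G.Adj x a → G.Adj x b → a ≠ b →
      ∃ w, G.Adj x w ∧ w ≠ a ∧ w ≠ b := by
    intro x a b hxa hxb hab
    have hcard : ({a, b} : Finset V) ⊆ G.neighborFinset x := by
      intro u hu
      simp only [Finset.mem_insert, Finset.mem_singleton] at hu
      rcases hu with rfl | rfl <;> simp [SimpleGraph.mem_neighborFinset, hxa, hxb]
    have h2 : ({a, b} : Finset V).card = 2 := by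
      rw [Finset.card_insert_of_notMem (by simp [hab]), Finset.card_singleton]
    have hpos : 0 < (G.neighborFinset x \ {a, b}).card := by
      rw [Finset.card_sdiff_of_subset hcard, h2, SimpleGraph.card_neighborFinset_eq_degree, hcubic]; omega
    obtain ⟨w, hw⟩ := Finset.card_pos.1 hpos
    rw [Finset.mem_sdiff] at hw
    obtain ⟨hw1, hw2⟩ := hw
    simp only [Finset.mem_insert, Finset.mem_singleton, not_or] at hw2
    exact ⟨w, (SimpleGraph.mem_neighborFinset _ _ _).1 hw1, hw2.1, hw2.2⟩
  obtain ⟨w1, ha1, hb1, hc1⟩ := third v1 v2 v4 h12 h41.symm (fun h => h24 h)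
  have hn1 := ha1.ne
  have he1 : s(v1, w1) ∈ H.edges := by
    apply hatt _ (G.mem_edgeSet.2 ha1) (Or.inl (by simp)) <;>
    · intro h; rcases Sym2.eq_iff.1 h with ⟨h1, h2⟩ | ⟨h1, h2⟩ <;> simp_all
  have x1 := aux_xor G H hH (hcubic v1) h12 h41.symm ha1 (fun h => h24 h) hb1.symm hc1.symm he1
  obtain ⟨w2, ha2, hb2, hc2⟩ := third v2 v1 v3 h12.symm h23 (fun h => h13 h)
  have hn2 := ha2.ne
  have he2 : s(v2, w2) ∈ H.edges := by
    apply hatt _ (G.mem_edgeSet.2 ha2) (Or.inr (Or.inl (by simp))) <;>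
    · intro h; rcases Sym2.eq_iff.1 h with ⟨h1, h2⟩ | ⟨h1, h2⟩ <;> simp_all
  have x2 := aux_xor G H hH (hcubic v2) h12.symm h23 ha2 (fun h => h13 h) hb2.symm hc2.symm he2
  obtain ⟨w3, ha3, hb3, hc3⟩ := third v3 v2 v4 h23.symm h34 (fun h => h24 h)
  have hn3 := ha3.ne
  have he3 : s(v3, w3) ∈ H.edges := by
    apply hatt _ (G.mem_edgeSet.2 ha3) (Or.inr (Or.inr (Or.inl (by simp)))) <;>
    · intro h; rcases Sym2.eq_iff.1 h with ⟨h1, h2⟩ | ⟨h1, h2⟩ <;> simp_all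
  have x3 := aux_xor G H hH (hcubic v3) h23.symm h34 ha3 (fun h => h24 h) hb3.symm hc3.symm he3
  obtain ⟨w4, ha4, hb4, hc4⟩ := third v4 v1 v3 h41 h34.symm (fun h => h13 h)
  have hn4 := ha4.ne
  have he4 : s(v4, w4) ∈ H.edges := by
    apply hatt _ (G.mem_edgeSet.2 ha4) (Or.inr (Or.inr (Or.inr (by simp)))) <;>
    · intro h; rcases Sym2.eq_iff.1 h with ⟨h1, h2⟩ | ⟨h1, h2⟩ <;> simp_all
  have x4 := aux_xor G H hH (hcubic v4) h41 h34.symm ha4 (fun h => h13 h) hb4.symm hc4.symm he4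
  rw [show s(v2, v1) = s(v1, v2) from Sym2.eq_swap] at x2
  rw [show s(v3, v2) = s(v2, v3) from Sym2.eq_swap] at x3
  rw [show s(v1, v4) = s(v4, v1) from Sym2.eq_swap] at x1
  rw [show s(v4, v3) = s(v3, v4) from Sym2.eq_swap] at x4
  tauto
end
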